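/- Let l ≥ 3 and r ≥ 2 be integers and M ∈ ℝ. Define ḡ(X) = (l/r)·h₂(rX/2) − (l−1)·h₂(X) + M·X for X ∈ [0, 2/r]. Then ḡ(0) = 0 and there exists δ > 0 such that ḡ(X) < 0 for all X ∈ (0, δ]. -/

import Mathlib

/-!
Writing `h₂ = negMulLog x + negMulLog (1 - x)`, the second summand lies in `[0, x]`, so up to
`O(X)` the two entropy terms of `ḡ(X)` contribute `-(l/2) X log X` and `(l - 1) X log X`.
Hence `ḡ(X) ≤ X ((l/2 - 1) log X + K)` for small `X` and a constant `K`, and the bracket tends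
to `-∞` as `X → 0⁺` because `l/2 - 1 > 0`.
-/

open Finset

noncomputable section

/-- Binary entropy in nats, with the convention `0 * log 0 = 0`
(automatic since `Real.log 0 = 0`). -/
def h2 (x : ℝ) : ℝ := -x * Real.log x - (1 - x) * Real.log (1 - x)

/-- The upper-bounding function
`ḡ(X) = (l/r) h₂(rX/2) - (l-1) h₂(X) + M X` from Appendix A. -/
def gbar (l r : ℕ) (M X : ℝ) : ℝ :=
  (l : ℝ) / (r : ℝ) * h2 ((r : ℝ) * X / 2) - ((l : ℝ) - 1) * h2 X + M * X

open Real Filter Topology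

lemma h2_eq_negMulLog_add_negMulLog_one_sub (x : ℝ) :
    h2 x = negMulLog x + negMulLog (1 - x) := by
  simp only [h2, negMulLog]
  ring

lemma negMulLog_le_h2 {x : ℝ} (h0 : 0 ≤ x) (h1 : x ≤ 1) : negMulLog x ≤ h2 x := by
  rw [h2_eq_negMulLog_add_negMulLog_one_sub]
  linarith [negMulLog_nonneg (sub_nonneg.2 h1) (sub_le_self 1 h0)]

lemma h2_le_negMulLog_add_self {x : ℝ} (h1 : x ≤ 1) : h2 x ≤ negMulLog x + x := by
  rw [h2_eq_negMulLog_add_negMulLog_one_sub]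
  linarith [negMulLog_le_one_sub_self (sub_nonneg.2 h1)]

@[simp]
lemma gbar_zero (l r : ℕ) (M : ℝ) : gbar l r M 0 = 0 := by
  simp [gbar, h2]

lemma gbar_le (l r : ℕ) (M : ℝ) {X : ℝ} (hl : 1 ≤ l) (hr : r ≠ 0) (hX : 0 < X)
    (hX1 : X ≤ 1) (hrX : r * X ≤ 2) :
    gbar l r M X ≤ X * ((l / 2 - 1) * log X + (M - l / 2 * log (r / 2) + l / 2)) := by
  have hr0 : (0 : ℝ) < r := by positivity
  have hl1 : (0 : ℝ) ≤ l - 1 := sub_nonneg.2 (by exact_mod_cast hl)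
  have hscaled : negMulLog (r * X / 2) = -(r * X / 2) * (log (r / 2) + log X) := by
    rw [negMulLog, mul_div_right_comm, log_mul (by positivity) hX.ne']
  have hfirst : (l : ℝ) / r * h2 (r * X / 2) ≤ l / r * (negMulLog (r * X / 2) + r * X / 2) :=
    mul_le_mul_of_nonneg_left (h2_le_negMulLog_add_self (by linarith)) (by positivity)
  have hsecond : (l - 1) * negMulLog X ≤ (l - 1) * h2 X :=
    mul_le_mul_of_nonneg_left (negMulLog_le_h2 hX.le hX1) hl1
  calc gbar l r M X
      ≤ l / r * (negMulLog (r * X / 2) + r * X / 2) - (l - 1) * negMulLog X + M * X := by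
        unfold gbar; linarith
    _ = X * ((l / 2 - 1) * log X + (M - l / 2 * log (r / 2) + l / 2)) := by
        rw [hscaled, negMulLog]
        field_simp
        ring

lemma eventually_gbar_neg (M : ℝ) {l r : ℕ} (hl : 3 ≤ l) (hr : r ≠ 0) :
    ∀ᶠ X in 𝓝[>] 0, gbar l r M X < 0 := by
  have hc : (0 : ℝ) < l / 2 - 1 := by
    have : (3 : ℝ) ≤ l := by exact_mod_cast hl
    linarith
  have hbracket : ∀ᶠ X in 𝓝[>] 0,
      (l / 2 - 1) * log X + (M - l / 2 * log (r / 2) + l / 2) < 0 :=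
    (tendsto_atBot_add_const_right _ _
      (tendsto_log_nhdsGT_zero.const_mul_atBot hc)).eventually_lt_atBot 0
  have hsmall : ∀ᶠ X in 𝓝[>] (0 : ℝ), X ≤ min 1 (2 / (r : ℝ)) :=
    eventually_nhdsWithin_of_eventually_nhds (eventually_le_nhds (by positivity))
  filter_upwards [hbracket, hsmall, self_mem_nhdsWithin] with X hneg hle hX
  have hrX : r * X ≤ 2 := by
    rw [← le_div_iff₀' (by positivity)]
    exact hle.trans (min_le_right _ _)
  exact (gbar_le l r M (by omega) hr hX (hle.trans (min_le_left _ _)) hrX).trans_lt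
    (mul_neg_of_pos_of_neg hX hneg)

/-- **`ḡ` vanishes at `0` and is negative on a punctured right neighborhood
of `0`.**  For `l ≥ 3`, `r ≥ 2` and any `M ∈ ℝ`, `ḡ(0) = 0` and there is
`δ > 0` with `ḡ(X) < 0` for all `X ∈ (0, δ]`. -/
theorem gbar_neg_near_zero (l r : ℕ) (hl : 3 ≤ l) (hr : 2 ≤ r) (M : ℝ) :
    gbar l r M 0 = 0 ∧ ∃ δ : ℝ, 0 < δ ∧ ∀ X : ℝ, 0 < X → X ≤ δ →
      gbar l r M X < 0 := by
  obtain ⟨δ, hδ, hneg⟩ :=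
    mem_nhdsGT_iff_exists_Ioc_subset.1 (eventually_gbar_neg M hl (by omega : r ≠ 0))
  exact ⟨gbar_zero l r M, δ, hδ, fun X hX hXδ => hneg ⟨hX, hXδ⟩⟩
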